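/- Let K be a field of characteristic zero and x + H a quasi-translation over K such that (JH)·(JH)|_{x=y} = 0. Then H(x + t·H(y)) = H, where t is an additional indeterminate and y is a fresh tuple of n indeterminates; in particular H(x + H(y)) = H. -/

import Mathlib

/-! Put `G_i(x, y) = ∑_k (∂_k H_i)(x) · H_k(y)`. Its `y`-derivatives are the entries of
`JH(x) · JH(y) = 0`, so in characteristic zero `G` does not involve `y`; evaluating at `y = x`
gives `G = JH · H = 0`. By the chain rule, `∂_t H_i(x + t H(y)) = G_i(x + t H(y), y) = 0`, so
`H(x + t H(y))` does not involve `t` and equals its value `H(x)` at `t = 0`. In the statement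
`t` is the variable `none` of `Option (Fin n ⊕ Fin n)`. -/

open MvPolynomial

/-- The Jacobian matrix `(∂H_i/∂x_j)` of a polynomial map `H`. -/
noncomputable def jac {K : Type} [CommRing K] {n : ℕ}
    (H : Fin n → MvPolynomial (Fin n) K) :
    Matrix (Fin n) (Fin n) (MvPolynomial (Fin n) K) :=
  Matrix.of fun i j => pderiv j (H i)

/-- `(JH)|_{x=x}`: the Jacobian, viewed in the larger ring with variables `x ⊕ y`. -/
noncomputable def jacX {K : Type} [CommRing K] {n : ℕ}
    (H : Fin n → MvPolynomial (Fin n) K) :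
    Matrix (Fin n) (Fin n) (MvPolynomial (Fin n ⊕ Fin n) K) :=
  (jac H).map (rename Sum.inl)

/-- `(JH)|_{x=y}`: the Jacobian with the fresh tuple `y` substituted for `x`. -/
noncomputable def jacY {K : Type} [CommRing K] {n : ℕ}
    (H : Fin n → MvPolynomial (Fin n) K) :
    Matrix (Fin n) (Fin n) (MvPolynomial (Fin n ⊕ Fin n) K) :=
  (jac H).map (rename Sum.inr)

/-- `H(y)`: the map `H` with the fresh tuple `y` substituted for `x`. -/
noncomputable def HY {K : Type} [CommRing K] {n : ℕ}
    (H : Fin n → MvPolynomial (Fin n) K) : Fin n → MvPolynomial (Fin n ⊕ Fin n) K :=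
  fun i => rename Sum.inr (H i)

namespace MvPolynomial

variable {R σ τ : Type*} [CommSemiring R]

theorem pderiv_aeval [Fintype σ] (φ : σ → MvPolynomial τ R) (j : τ) (p : MvPolynomial σ R) :
    pderiv j (aeval φ p) = ∑ k, aeval φ (pderiv k p) * pderiv j (φ k) := by
  classical
  induction p using MvPolynomial.induction_on with
  | C a => simp
  | add p q hp hq => simp only [map_add, hp, hq, add_mul, Finset.sum_add_distrib]
  | mul_X p i hp =>
    simp only [map_mul, aeval_X, pderiv_mul, hp, pderiv_X, Pi.single_apply, map_add,
      apply_ite (aeval φ), map_zero, add_mul, Finset.sum_add_distrib, mul_ite, mul_one,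
      mul_zero, ite_mul, zero_mul, Finset.sum_ite_eq, Finset.mem_univ, if_true, Finset.sum_mul]
    exact congrArg (· + _) (Finset.sum_congr rfl fun k _ => by ring)

theorem pderiv_rename_of_notMem_range {f : σ → τ} {i : τ} (hi : i ∉ Set.range f)
    (p : MvPolynomial σ R) : pderiv i (rename f p) = 0 :=
  pderiv_eq_zero_of_notMem_vars fun hv =>
    let ⟨u, _, hu⟩ := mem_vars_rename f p hv
    hi ⟨u, hu⟩

theorem pderiv_eq_zero_iff_notMem_vars [IsAddTorsionFree R] {i : σ} {p : MvPolynomial σ R} :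
    pderiv i p = 0 ↔ i ∉ p.vars := by
  refine ⟨fun h hv => ?_, pderiv_eq_zero_of_notMem_vars⟩
  obtain ⟨d, hd, hdi⟩ := (mem_vars_iff_mem_support i).mp hv
  have hdi : d i ≠ 0 := Finsupp.mem_support_iff.mp hdi
  have hle : Finsupp.single i 1 ≤ d := fun j => by
    by_cases hj : j = i <;> grind [Finsupp.single_eq_same, Finsupp.single_eq_of_ne]
  have hc := congrArg (coeff (d - Finsupp.single i 1)) h
  have hcast : ((d i - 1 : ℕ) : R) + 1 = d i := by
    rw [← Nat.cast_add_one, Nat.sub_add_cancel (Nat.one_le_iff_ne_zero.mpr hdi)]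
  rw [coeff_pderiv, tsub_add_cancel_of_le hle, coeff_zero, Finsupp.tsub_apply,
    Finsupp.single_eq_same, hcast, mul_comm, ← nsmul_eq_mul] at hc
  exact mem_support_iff.mp hd (nsmul_right_injective hdi (hc.trans (smul_zero _).symm))

theorem eq_rename_aeval_of_pderiv_eq_zero [IsAddTorsionFree R] {f : σ → τ}
    (hf : Function.Injective f) {g : τ → MvPolynomial σ R} (hg : ∀ s, g (f s) = X s)
    {p : MvPolynomial τ R} (hp : ∀ i ∉ Set.range f, pderiv i p = 0) :
    p = rename f (aeval g p) := by
  obtain ⟨q, rfl⟩ := exists_rename_eq_of_vars_subset_range p f hf fun i hi =>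
    not_not.mp fun hni => pderiv_eq_zero_iff_notMem_vars.mp (hp i hni) hi
  rw [aeval_rename, show g ∘ f = X from _root_.funext hg, aeval_X_left_apply]

end MvPolynomial

section QuasiTranslation

variable {K : Type} [CommRing K] [IsAddTorsionFree K] {n : ℕ}
  {H : Fin n → MvPolynomial (Fin n) K}

theorem sum_rename_pderiv_mul_HY_eq_zero (hq : (jac H).mulVec H = 0)
    (h2 : jacX H * jacY H = 0) (i : Fin n) :
    ∑ k, rename Sum.inl (pderiv k (H i)) * HY H k = 0 := by
  set G := ∑ k, rename Sum.inl (pderiv k (H i)) * HY H k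
  have hy : ∀ j, pderiv (Sum.inr j) G = 0 := by
    intro j
    have hx : ∀ p : MvPolynomial (Fin n) K, pderiv (Sum.inr j) (rename Sum.inl p) = 0 :=
      pderiv_rename_of_notMem_range (by simp)
    simpa [G, pderiv_mul, hx, HY, pderiv_rename Sum.inr_injective, jacX, jacY, jac,
      Matrix.mul_apply] using congrFun (congrFun h2 i) j
  have hdiag : aeval (Sum.elim X X : Fin n ⊕ Fin n → MvPolynomial (Fin n) K) G = 0 := by
    simp only [G, HY, map_sum, map_mul, aeval_rename, Sum.elim_comp_inl, Sum.elim_comp_inr,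
      aeval_X_left_apply]
    exact congrFun hq i
  rw [eq_rename_aeval_of_pderiv_eq_zero Sum.inl_injective (g := Sum.elim X X) (fun _ => rfl)
    (p := G) (by rintro (a | j) hj; exacts [absurd ⟨a, rfl⟩ hj, hy j]), hdiag, map_zero]

theorem aeval_add_X_mul_HY_eq_rename {i : Fin n}
    (hG : ∑ k, rename Sum.inl (pderiv k (H i)) * HY H k = 0) :
    aeval (fun k : Fin n => X (some (Sum.inl k)) +
        X (none : Option (Fin n ⊕ Fin n)) * rename (fun l => some (Sum.inr l)) (H k)) (H i) =
      rename (fun k : Fin n => some (Sum.inl k)) (H i) := by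
  set φ : Fin n → MvPolynomial (Option (Fin n ⊕ Fin n)) K := fun k =>
    X (some (Sum.inl k)) + X none * rename (fun l => some (Sum.inr l)) (H k)
  have hφ : ∀ k, pderiv none (φ k) = rename (fun l => some (Sum.inr l)) (H k) := fun k => by
    have hHy : pderiv (none : Option (Fin n ⊕ Fin n))
        (rename (fun l => some (Sum.inr l)) (H k)) = 0 := pderiv_rename_of_notMem_range (by simp) _
    simp [φ, hHy]
  have ht : pderiv none (aeval φ (H i)) = 0 := by
    -- the chain rule turns `∂_t H_i(φ)` into `G_i` evaluated at `(x + t H(y), y)`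
    have := congrArg (aeval (Sum.elim φ (X ∘ fun l => some (Sum.inr l)))) hG
    simpa only [pderiv_aeval, hφ, map_sum, map_mul, aeval_rename, HY, Sum.elim_comp_inl,
      Sum.elim_comp_inr, map_zero, ← rename_eq_aeval] using this
  let t₀ : Option (Fin n ⊕ Fin n) → MvPolynomial (Fin n ⊕ Fin n) K := fun o => o.elim 0 X
  have hφ₀ : (fun k => aeval t₀ (φ k)) = X ∘ Sum.inl := by
    funext k
    simp [t₀, φ]
  rw [eq_rename_aeval_of_pderiv_eq_zero (Option.some_injective _) (g := t₀) (fun _ => rfl)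
    (p := aeval φ (H i)) (by rintro (_ | s) hs; exacts [ht, absurd ⟨s, rfl⟩ hs]),
    comp_aeval_apply (f := φ) (aeval t₀), hφ₀, ← rename_eq_aeval, rename_rename]
  rfl

theorem aeval_add_HY_eq_rename {i : Fin n}
    (hG : ∑ k, rename Sum.inl (pderiv k (H i)) * HY H k = 0) :
    aeval (fun k : Fin n => (X (Sum.inl k) : MvPolynomial (Fin n ⊕ Fin n) K) + HY H k) (H i) =
      rename Sum.inl (H i) := by
  let t₁ : Option (Fin n ⊕ Fin n) → MvPolynomial (Fin n ⊕ Fin n) K := fun o => o.elim 1 X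
  have h := congrArg (aeval t₁) (aeval_add_X_mul_HY_eq_rename hG)
  have ht₁ : ∀ k, aeval t₁ (X (some (Sum.inl k)) + X none *
      rename (fun l => some (Sum.inr l)) (H k)) = X (Sum.inl k) + HY H k := fun k => by
    rw [map_add, map_mul, aeval_rename, HY, rename_eq_aeval]
    simp [t₁, Function.comp_def]
  rw [comp_aeval_apply, aeval_rename] at h
  simp only [ht₁] at h
  rwa [show t₁ ∘ (fun k => some (Sum.inl k)) = X ∘ Sum.inl from rfl, ← rename_eq_aeval] at h

end QuasiTranslation

theorem stmt17 {K : Type} [Field K] [CharZero K] {n : ℕ}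
    (H : Fin n → MvPolynomial (Fin n) K)
    (hq : (jac H).mulVec H = 0)
    (h2 : jacX H * jacY H = 0) :
    (∀ i : Fin n,
      aeval (fun k : Fin n => X (some (Sum.inl k)) +
          X (none : Option (Fin n ⊕ Fin n)) * rename (fun l => some (Sum.inr l)) (H k))
        (H i) = rename (fun k : Fin n => some (Sum.inl k)) (H i)) ∧
    (∀ i : Fin n,
      aeval (fun k : Fin n => (X (Sum.inl k) : MvPolynomial (Fin n ⊕ Fin n) K) + HY H k)
        (H i) = rename Sum.inl (H i)) := by
  have hG := sum_rename_pderiv_mul_HY_eq_zero hq h2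
  exact ⟨fun i => aeval_add_X_mul_HY_eq_rename (hG i), fun i => aeval_add_HY_eq_rename (hG i)⟩
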